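/- Let 𝓑 be a basis of a Banach space X and 𝐧 a strictly increasing sequence of positive integers. The following statements are equivalent: (i) 𝓑 is (𝐧, almost greedy); (ii) there is a constant C ≥ 1 such that ‖x − G_m(x)‖ ≤ C·min_{0≤k≤m} σ̌^𝐧_k(x) for all x ∈ X, all m ≥ 1 and all greedy sums G_m(x); (iii) 𝓑 is (𝐧, consecutive almost greedy) of type I, i.e., there is C ≥ 1 with ‖x − G_m(x)‖ ≤ C·σ̌^𝐧_m(x) for all x, m and greedy sums. -/

import Mathlib

open scoped BigOperators ENNReal NNReal

/-- The collection `𝕋(𝐧)`: pairs of finite sets `(A, D)` with `A ⊆ 𝐧`, `|A| ≤ |D|`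
and `A < D ∩ 𝐧`. -/
def TPair (seq : ℕ → ℕ) (A D : Finset ℕ) : Prop :=
  (↑A : Set ℕ) ⊆ Set.range seq ∧ A.card ≤ D.card ∧
    ∀ a ∈ A, ∀ d ∈ D, d ∈ Set.range seq → a < d

/-- The collection `𝕊(𝐧)`: pairs of finite sets `(A, D)` with `A ⊆ 𝐧` and `|A| ≤ |D|`. -/
def SPair (seq : ℕ → ℕ) (A D : Finset ℕ) : Prop :=
  (↑A : Set ℕ) ⊆ Set.range seq ∧ A.card ≤ D.card

/-- The interval `{n_{k+1}, …, n_{k+m}}` of `m` consecutive terms of the sequence `seq`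
(0-indexed: `seq k, …, seq (k+m-1)`). -/
def intervalSet (seq : ℕ → ℕ) (k m : ℕ) : Finset ℕ :=
  (Finset.range m).image fun i => seq (k + i)

/-- The (1-based) index `ι(max A)` of the largest element of `A` in the sequence `seq`
(`0` if `A` is empty). -/
noncomputable def iotaMax (seq : ℕ → ℕ) (A : Finset ℕ) : ℕ :=
  if h : A.Nonempty then sInf {i | seq i = A.max' h} + 1 else 0

/-- The collection `𝕋^ω(𝐧)`: pairs of finite sets `(A, D)` with `A ⊆ 𝐧`, `ω(A) ≤ ω(D)`
and `A < D ∩ 𝐧`. -/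
def WTPair (w : Set ℕ → ℝ≥0∞) (seq : ℕ → ℕ) (A D : Finset ℕ) : Prop :=
  (↑A : Set ℕ) ⊆ Set.range seq ∧ w (↑A : Set ℕ) ≤ w (↑D : Set ℕ) ∧
    ∀ a ∈ A, ∀ d ∈ D, d ∈ Set.range seq → a < d

/-- A (semi-normalized) basis `(e_n)` of a Banach space `X`, together with its biorthogonal
functionals `(e_n^*)`: the span of the `e_n` is norm-dense, `e_j^*(e_k) = δ_{jk}`, and the
norms of the `e_n` and `e_n^*` are bounded above and away from zero. -/
structure BasisOf (𝕜 : Type*) (X : Type*) [RCLike 𝕜] [NormedAddCommGroup X]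
    [NormedSpace 𝕜 X] where
  e : ℕ → X
  coord : ℕ → X →L[𝕜] 𝕜
  dense_span : Dense (↑(Submodule.span 𝕜 (Set.range e)) : Set X)
  biorth : ∀ j k : ℕ, coord j (e k) = if j = k then (1 : 𝕜) else 0
  norm_bounds : ∃ c₁ c₂ : ℝ, 0 < c₁ ∧ (∀ n, c₁ ≤ ‖e n‖ ∧ c₁ ≤ ‖coord n‖) ∧
    ∀ n, ‖e n‖ ≤ c₂ ∧ ‖coord n‖ ≤ c₂

namespace BasisOf

variable {𝕜 : Type*} {X : Type*} [RCLike 𝕜] [NormedAddCommGroup X] [NormedSpace 𝕜 X]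
variable (B : BasisOf 𝕜 X)

/-- The projection `P_A(x) = ∑_{n ∈ A} e_n^*(x) e_n`. -/
noncomputable def proj (A : Finset ℕ) (x : X) : X := ∑ n ∈ A, B.coord n x • B.e n

/-- `1_{εA} = ∑_{n ∈ A} ε_n e_n`. -/
noncomputable def sgnSum (ε : ℕ → 𝕜) (A : Finset ℕ) : X := ∑ n ∈ A, ε n • B.e n

/-- `1_A = ∑_{n ∈ A} e_n`. -/
noncomputable def ones (A : Finset ℕ) : X := ∑ n ∈ A, B.e n

/-- `P^𝐧_m(x) = ∑_{i=1}^m e_{n_i}^*(x) e_{n_i}`, the projection on the first `m` terms of the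
subsequence given by `seq`. -/
noncomputable def projSeq (seq : ℕ → ℕ) (m : ℕ) (x : X) : X :=
  ∑ i ∈ Finset.range m, B.coord (seq i) x • B.e (seq i)

/-- `A` is a greedy set of `x`: the coefficients inside `A` dominate those outside. -/
def IsGreedySet (x : X) (A : Finset ℕ) : Prop :=
  ∀ a ∈ A, ∀ b ∉ A, ‖B.coord b x‖ ≤ ‖B.coord a x‖

/-- The support `{n : e_n^*(x) ≠ 0}`. -/
def supp (x : X) : Set ℕ := {n | B.coord n x ≠ 0}

/-- `𝓑` is `C`-(`𝐧`, strong partially greedy):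
`‖x - G_m(x)‖ ≤ C ⋅ σ̂^𝐧_m(x)` for all `x`, all `m ≥ 1` and all greedy sums. -/
def SPGWith (seq : ℕ → ℕ) (C : ℝ) : Prop :=
  ∀ x : X, ∀ m : ℕ, 1 ≤ m → ∀ A : Finset ℕ, A.card = m → B.IsGreedySet x A →
    ∀ k : ℕ, k ≤ m → ‖x - B.proj A x‖ ≤ C * ‖x - B.projSeq seq k x‖

/-- `𝓑` is (`𝐧`, strong partially greedy). -/
def SPG (seq : ℕ → ℕ) : Prop := ∃ C : ℝ, 1 ≤ C ∧ B.SPGWith seq C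

/-- `𝓑` is quasi-greedy with constant `C`. -/
def QuasiGreedyWith (C : ℝ) : Prop :=
  ∀ x : X, ∀ A : Finset ℕ, A.Nonempty → B.IsGreedySet x A → ‖B.proj A x‖ ≤ C * ‖x‖

/-- `𝓑` is quasi-greedy. -/
def QuasiGreedy : Prop := ∃ C : ℝ, B.QuasiGreedyWith C

/-- `𝓑` is suppression quasi-greedy with constant `C`. -/
def SuppQGWith (C : ℝ) : Prop :=
  ∀ x : X, ∀ A : Finset ℕ, A.Nonempty → B.IsGreedySet x A → ‖x - B.proj A x‖ ≤ C * ‖x‖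

/-- `𝓑` is `C`-(`𝐧`, PSLC). -/
def PSLCWith (seq : ℕ → ℕ) (C : ℝ) : Prop :=
  ∀ x : X, (∀ n, ‖B.coord n x‖ ≤ 1) → ∀ A D : Finset ℕ, TPair seq A D →
    (∀ d ∈ D, B.coord d x = 0) →
    (∀ a ∈ A, ∀ j : ℕ, (j ∈ D ∨ B.coord j x ≠ 0) → j ∈ Set.range seq → a < j) →
    ∀ ε δ : ℕ → 𝕜, (∀ n, ‖ε n‖ = 1) → (∀ n, ‖δ n‖ = 1) →
      ‖x + B.sgnSum ε A‖ ≤ C * ‖x + B.sgnSum δ D‖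

/-- `𝓑` is (`𝐧`, PSLC). -/
def PSLC (seq : ℕ → ℕ) : Prop := ∃ C : ℝ, 1 ≤ C ∧ B.PSLCWith seq C

/-- `𝓑` is (`𝐧`, superconservative) with constant `C`. -/
def SuperconservativeWith (seq : ℕ → ℕ) (C : ℝ) : Prop :=
  ∀ A D : Finset ℕ, TPair seq A D →
    ∀ ε δ : ℕ → 𝕜, (∀ n, ‖ε n‖ = 1) → (∀ n, ‖δ n‖ = 1) →
      ‖B.sgnSum ε A‖ ≤ C * ‖B.sgnSum δ D‖

/-- `𝓑` is (`𝐧`, superconservative). -/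
def Superconservative (seq : ℕ → ℕ) : Prop :=
  ∃ C : ℝ, 0 < C ∧ B.SuperconservativeWith seq C

/-- `𝓑` is (`𝐧`, conservative) with constant `C`. -/
def ConservativeWith (seq : ℕ → ℕ) (C : ℝ) : Prop :=
  ∀ A D : Finset ℕ, TPair seq A D → ‖B.ones A‖ ≤ C * ‖B.ones D‖

/-- `𝓑` is (`𝐧`, conservative). -/
def Conservative (seq : ℕ → ℕ) : Prop := ∃ C : ℝ, 0 < C ∧ B.ConservativeWith seq C

/-- `𝓑` is (`𝐧`, democratic) with constant `C`. -/
def DemocraticWith (seq : ℕ → ℕ) (C : ℝ) : Prop :=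
  ∀ A D : Finset ℕ, SPair seq A D → ‖B.ones A‖ ≤ C * ‖B.ones D‖

/-- `𝓑` is (`𝐧`, democratic). -/
def Democratic (seq : ℕ → ℕ) : Prop := ∃ C : ℝ, B.DemocraticWith seq C

/-- `𝓑` is (`𝐧`, almost greedy) with constant `C`:
`‖x - G_m(x)‖ ≤ C σ̃^𝐧_m(x)` where `σ̃^𝐧_m(x) = inf {‖x - P_D(x)‖ : D ⊆ 𝐧, |D| = m}`. -/
def AlmostGreedyWith (seq : ℕ → ℕ) (C : ℝ) : Prop :=
  ∀ x : X, ∀ m : ℕ, 1 ≤ m → ∀ A : Finset ℕ, A.card = m → B.IsGreedySet x A →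
    ∀ D : Finset ℕ, (↑D : Set ℕ) ⊆ Set.range seq → D.card = m →
      ‖x - B.proj A x‖ ≤ C * ‖x - B.proj D x‖

/-- `𝓑` is (`𝐧`, almost greedy). -/
def AlmostGreedy (seq : ℕ → ℕ) : Prop := ∃ C : ℝ, 1 ≤ C ∧ B.AlmostGreedyWith seq C

/-- `𝓑` is 1-unconditional. -/
def OneUnconditional : Prop :=
  ∀ (F : Finset ℕ) (a b : ℕ → 𝕜), (∀ n, ‖a n‖ ≤ ‖b n‖) →
    ‖∑ n ∈ F, a n • B.e n‖ ≤ ‖∑ n ∈ F, b n • B.e n‖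

/-- `𝓑` is `C`-(`𝐧`, consecutive almost greedy) of type I. -/
def CAGIWith (seq : ℕ → ℕ) (C : ℝ) : Prop :=
  ∀ x : X, ∀ m : ℕ, 1 ≤ m → ∀ A : Finset ℕ, A.card = m → B.IsGreedySet x A →
    ∀ k : ℕ, ‖x - B.proj A x‖ ≤ C * ‖x - B.proj (intervalSet seq k m) x‖

/-- `𝓑` is `C`-(`𝐧`, consecutive almost greedy) of type II. -/
def CAGIIWith (seq : ℕ → ℕ) (C : ℝ) : Prop :=
  ∀ x : X, ∀ m : ℕ, 1 ≤ m → ∀ A : Finset ℕ, A.card = m → B.IsGreedySet x A →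
    ∀ k p : ℕ, ((↑(intervalSet seq k p) : Set ℕ) ∩ B.supp x).ncard ≤ m →
      ‖x - B.proj A x‖ ≤ C * ‖x - B.proj (intervalSet seq k p) x‖

/-- `𝓑` is `C`-(`𝐧`, RSLC). -/
def RSLCWith (seq : ℕ → ℕ) (C : ℝ) : Prop :=
  ∀ x : X, (∀ n, ‖B.coord n x‖ ≤ 1) → ∀ A D : Finset ℕ, SPair seq A D →
    (∀ d ∈ D, B.coord d x = 0) →
    (∀ j : ℕ, (j ∈ D ∨ B.coord j x ≠ 0) → j ∈ Set.range seq →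
      (∀ a ∈ A, j < a) ∨ (∀ a ∈ A, a < j)) →
    ∀ ε δ : ℕ → 𝕜, (∀ n, ‖ε n‖ = 1) → (∀ n, ‖δ n‖ = 1) →
      ‖x + B.sgnSum ε A‖ ≤ C * ‖x + B.sgnSum δ D‖

/-- `𝓑` is `C`-(`𝐧`, SLC). -/
def SLCWith (seq : ℕ → ℕ) (C : ℝ) : Prop :=
  ∀ x : X, (∀ n, ‖B.coord n x‖ ≤ 1) → ∀ A D : Finset ℕ, SPair seq A D →
    Disjoint A D → (∀ a ∈ A, B.coord a x = 0) → (∀ d ∈ D, B.coord d x = 0) →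
    ∀ ε δ : ℕ → 𝕜, (∀ n, ‖ε n‖ = 1) → (∀ n, ‖δ n‖ = 1) →
      ‖x + B.sgnSum ε A‖ ≤ C * ‖x + B.sgnSum δ D‖

/-- The Lebesgue-type parameter `L̂^𝐧_m`: the least constant `C ∈ [0,∞]` with
`‖x - G_m(x)‖ ≤ C σ̂^𝐧_m(x)` for all `x` and all greedy sums `G_m(x)`. -/
noncomputable def Lhat (seq : ℕ → ℕ) (m : ℕ) : ℝ≥0∞ :=
  sInf {C : ℝ≥0∞ | ∀ (x : X) (A : Finset ℕ), A.card = m → B.IsGreedySet x A →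
    ∀ k : ℕ, k ≤ m →
      (‖x - B.proj A x‖₊ : ℝ≥0∞) ≤ C * (‖x - B.projSeq seq k x‖₊ : ℝ≥0∞)}

/-- The parameter `g_m^c`. -/
noncomputable def gc (m : ℕ) : ℝ≥0∞ :=
  ⨆ (x : X) (_ : x ≠ 0) (A : Finset ℕ) (_ : A.card ≤ m) (_ : B.IsGreedySet x A),
    (‖x - B.proj A x‖₊ : ℝ≥0∞) / (‖x‖₊ : ℝ≥0∞)

/-- The parameter `g̃_m`. -/
noncomputable def gtilde (m : ℕ) : ℝ≥0∞ :=
  ⨆ (x : X) (_ : x ≠ 0) (A : Finset ℕ) (A' : Finset ℕ) (_ : A ⊆ A') (_ : A.card < A'.card)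
    (_ : A'.card ≤ m) (_ : B.IsGreedySet x A) (_ : B.IsGreedySet x A'),
    (‖B.proj A' x - B.proj A x‖₊ : ℝ≥0∞) / (‖x‖₊ : ℝ≥0∞)

/-- The parameter `sc^𝐧_m`. -/
noncomputable def scParam (seq : ℕ → ℕ) (m : ℕ) : ℝ≥0∞ :=
  ⨆ (A : Finset ℕ) (D : Finset ℕ) (_ : TPair seq A D) (_ : D.card ≤ m)
    (_ : ∀ a ∈ A, a ≤ seq (m - 1)) (ε : ℕ → 𝕜) (_ : ∀ n, ‖ε n‖ = 1)
    (δ : ℕ → 𝕜) (_ : ∀ n, ‖δ n‖ = 1),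
    (‖B.sgnSum ε A‖₊ : ℝ≥0∞) / (‖B.sgnSum δ D‖₊ : ℝ≥0∞)

/-- The parameter `ω^𝐧_m`. -/
noncomputable def omegaParam (seq : ℕ → ℕ) (m : ℕ) : ℝ≥0∞ :=
  ⨆ (x : X) (_ : ∀ n, ‖B.coord n x‖ ≤ 1) (A : Finset ℕ) (D : Finset ℕ)
    (_ : (↑A : Set ℕ) ⊆ Set.range seq) (_ : A.card ≤ D.card) (_ : D.card ≤ m)
    (_ : ∀ a ∈ A, a ≤ seq (m - 1)) (_ : ∀ d ∈ D, B.coord d x = 0)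
    (_ : ∀ a ∈ A, ∀ j : ℕ, (j ∈ D ∨ B.coord j x ≠ 0) → j ∈ Set.range seq → a < j)
    (ε : ℕ → 𝕜) (_ : ∀ n, ‖ε n‖ = 1) (δ : ℕ → 𝕜) (_ : ∀ n, ‖δ n‖ = 1),
    (‖x + B.sgnSum ε A‖₊ : ℝ≥0∞) / (‖x + B.sgnSum δ D‖₊ : ℝ≥0∞)

/-- The parameter `ω̂^𝐧_m`. -/
noncomputable def omegaHatParam (seq : ℕ → ℕ) (m : ℕ) : ℝ≥0∞ :=
  ⨆ (x : X) (_ : ∀ n, ‖B.coord n x‖ ≤ 1) (A : Finset ℕ) (D : Finset ℕ)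
    (_ : (↑A : Set ℕ) ⊆ Set.range seq) (_ : A.card ≤ D.card) (_ : D.card ≤ m)
    (_ : ∀ a ∈ A, a ≤ seq (m - 1))
    (_ : ∀ d ∈ D, B.coord d (x - B.proj A x) = 0)
    (_ : ∀ a ∈ A, ∀ j : ℕ, (j ∈ D ∨ B.coord j (x - B.proj A x) ≠ 0) →
      j ∈ Set.range seq → a < j)
    (ε : ℕ → 𝕜) (_ : ∀ n, ‖ε n‖ = 1),
    (‖x‖₊ : ℝ≥0∞) / (‖x - B.proj A x + B.sgnSum ε D‖₊ : ℝ≥0∞)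

/-- `κ = sup_{j,k} ‖e_j‖ ‖e_k^*‖`. -/
noncomputable def kappa : ℝ≥0∞ :=
  ⨆ (j : ℕ) (k : ℕ), ((‖B.e j‖₊ * ‖B.coord k‖₊ : ℝ≥0) : ℝ≥0∞)

/-- `𝓑` is `𝐬`-(`𝐧`, strong partially greedy) with constant `C`:
the strong partially greedy inequality for all orders `m` in the sequence `s`. -/
def SPGOnWith (seq : ℕ → ℕ) (s : ℕ → ℕ) (C : ℝ) : Prop :=
  ∀ x : X, ∀ i : ℕ, ∀ A : Finset ℕ, A.card = s i → B.IsGreedySet x A →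
    ∀ k : ℕ, k ≤ s i → ‖x - B.proj A x‖ ≤ C * ‖x - B.projSeq seq k x‖

/-- `𝓑` is (`λ`, `𝐧`, strong partially greedy). -/
def LamSPG (seq : ℕ → ℕ) (lam : ℝ) : Prop :=
  ∃ C : ℝ, 1 ≤ C ∧ ∀ x : X, ∀ m : ℕ, 1 ≤ m →
    ∀ A : Finset ℕ, A.card = ⌈lam * (m : ℝ)⌉₊ → B.IsGreedySet x A →
      ∀ k : ℕ, k ≤ m → ‖x - B.proj A x‖ ≤ C * ‖x - B.projSeq seq k x‖

/-- `𝓑` is (`λ`, `𝐧`, PSLC). -/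
def LamPSLC (seq : ℕ → ℕ) (lam : ℝ) : Prop :=
  ∃ C : ℝ, 1 ≤ C ∧ ∀ x : X, (∀ n, ‖B.coord n x‖ ≤ 1) →
    ∀ A D : Finset ℕ, (↑A : Set ℕ) ⊆ Set.range seq → A.card ≤ D.card →
      (lam - 1) * (iotaMax seq A : ℝ) + A.card ≤ D.card →
      (∀ d ∈ D, B.coord d x = 0) →
      (∀ a ∈ A, ∀ j : ℕ, (j ∈ D ∨ B.coord j x ≠ 0) → j ∈ Set.range seq → a < j) →
      ∀ ε δ : ℕ → 𝕜, (∀ n, ‖ε n‖ = 1) → (∀ n, ‖δ n‖ = 1) →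
        ‖x + B.sgnSum ε A‖ ≤ C * ‖x + B.sgnSum δ D‖

/-- `𝓑` is (`λ`, `𝐧`, superconservative). -/
def LamSuperconservative (seq : ℕ → ℕ) (lam : ℝ) : Prop :=
  ∃ C : ℝ, 0 < C ∧ ∀ A D : Finset ℕ, TPair seq A D →
    (lam - 1) * (iotaMax seq A : ℝ) + A.card ≤ D.card →
    ∀ ε δ : ℕ → 𝕜, (∀ n, ‖ε n‖ = 1) → (∀ n, ‖δ n‖ = 1) →
      ‖B.sgnSum ε A‖ ≤ C * ‖B.sgnSum δ D‖

/-- `𝓑` is (`λ`, `𝐧`, conservative). -/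
def LamConservative (seq : ℕ → ℕ) (lam : ℝ) : Prop :=
  ∃ C : ℝ, 0 < C ∧ ∀ A D : Finset ℕ, TPair seq A D →
    (lam - 1) * (iotaMax seq A : ℝ) + A.card ≤ D.card →
    ‖B.ones A‖ ≤ C * ‖B.ones D‖

/-- `𝓑` is `ω`-(`𝐧`, strong partially greedy) for the weight on sets `w`. -/
def WSPG (seq : ℕ → ℕ) (w : Set ℕ → ℝ≥0∞) : Prop :=
  ∃ C : ℝ, 1 ≤ C ∧ ∀ x : X, ∀ m : ℕ, 1 ≤ m → ∀ A : Finset ℕ, A.card = m →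
    B.IsGreedySet x A → ∀ m' : ℕ,
      w (↑((Finset.range m').image seq \ A) : Set ℕ) ≤
        w (↑(A \ (Finset.range m').image seq) : Set ℕ) →
      ‖x - B.proj A x‖ ≤ C * ‖x - B.proj ((Finset.range m').image seq) x‖

/-- `𝓑` is `ω`-(`𝐧`, PSLC). -/
def WPSLC (seq : ℕ → ℕ) (w : Set ℕ → ℝ≥0∞) : Prop :=
  ∃ C : ℝ, 1 ≤ C ∧ ∀ x : X, (∀ n, ‖B.coord n x‖ ≤ 1) →
    ∀ A D : Finset ℕ, WTPair w seq A D →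
      (∀ d ∈ D, B.coord d x = 0) →
      (∀ a ∈ A, ∀ j : ℕ, (j ∈ D ∨ B.coord j x ≠ 0) → j ∈ Set.range seq → a < j) →
      ∀ ε δ : ℕ → 𝕜, (∀ n, ‖ε n‖ = 1) → (∀ n, ‖δ n‖ = 1) →
        ‖x + B.sgnSum ε A‖ ≤ C * ‖x + B.sgnSum δ D‖

/-- `𝓑` is `ω`-(`𝐧`, superconservative). -/
def WSuperconservative (seq : ℕ → ℕ) (w : Set ℕ → ℝ≥0∞) : Prop :=
  ∃ C : ℝ, 0 < C ∧ ∀ A D : Finset ℕ, WTPair w seq A D →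
    ∀ ε δ : ℕ → 𝕜, (∀ n, ‖ε n‖ = 1) → (∀ n, ‖δ n‖ = 1) →
      ‖B.sgnSum ε A‖ ≤ C * ‖B.sgnSum δ D‖

/-- `𝓑` is `ω`-(`𝐧`, conservative). -/
def WConservative (seq : ℕ → ℕ) (w : Set ℕ → ℝ≥0∞) : Prop :=
  ∃ C : ℝ, 0 < C ∧ ∀ A D : Finset ℕ, WTPair w seq A D → ‖B.ones A‖ ≤ C * ‖B.ones D‖

end BasisOf

/-- A Banach space over `𝕜` equipped with a basis. -/
structure BanachWithBasis (𝕜 : Type*) [RCLike 𝕜] where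
  carrier : Type
  [grp : NormedAddCommGroup carrier]
  [mod : NormedSpace 𝕜 carrier]
  [comp : CompleteSpace carrier]
  basis : BasisOf 𝕜 carrier

attribute [instance] BanachWithBasis.grp BanachWithBasis.mod BanachWithBasis.comp

/-!
The substantial implication is (iii) ⇒ (i). Comparing with far-out intervals first shows that
the type I inequality makes `𝓑` suppression quasi-greedy and, applied to suitably built vectors,
that `t ‖1_{εS}‖ ≤ 2C² ‖y‖` whenever `S ⊆ 𝐧` has as many elements as a greedy set of `y` on
which all coefficients are at least `t`. Given a greedy set `A` and `D ⊆ 𝐧` with `|A| = |D|`,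
put `y = x - P_D x`; then `x - P_A x = (y - P_{A∖D} y) + P_{D∖A} x`. The first term is at most
`C ‖y‖` by quasi-greediness; by convexity the second is at most `2C² ‖y‖`, taking for `t` the
largest coefficient of `x` on `D ∖ A`.
-/

open Filter Topology

section IntervalSet

variable {seq : ℕ → ℕ}

theorem mem_intervalSet {k m n : ℕ} : n ∈ intervalSet seq k m ↔ ∃ i < m, seq (k + i) = n := by
  simp [intervalSet]

theorem intervalSet_card (hseq : StrictMono seq) (k m : ℕ) : (intervalSet seq k m).card = m :=
  (Finset.card_image_of_injective _ (hseq.injective.comp (add_right_injective k))).trans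
    (Finset.card_range m)

theorem intervalSet_subset_range (k m : ℕ) : (↑(intervalSet seq k m) : Set ℕ) ⊆ Set.range seq := by
  intro n hn
  obtain ⟨i, -, rfl⟩ := mem_intervalSet.1 hn
  exact ⟨k + i, rfl⟩

theorem le_of_mem_intervalSet (hseq : StrictMono seq) {k m n : ℕ} (hn : n ∈ intervalSet seq k m) :
    k ≤ n := by
  obtain ⟨i, -, rfl⟩ := mem_intervalSet.1 hn
  exact (Nat.le_add_right k i).trans hseq.le_apply

theorem disjoint_intervalSet (hseq : StrictMono seq) {k m j : ℕ} (h : k + m ≤ j) (p : ℕ) :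
    Disjoint (intervalSet seq k m) (intervalSet seq j p) := by
  simp only [Finset.disjoint_left, mem_intervalSet]
  rintro _ ⟨i, hi, rfl⟩ ⟨i', -, h'⟩
  have := hseq.injective h'
  omega

theorem eventually_disjoint_intervalSet (hseq : StrictMono seq) (G : Finset ℕ) (m : ℕ) :
    ∀ᶠ k in atTop, Disjoint G (intervalSet seq k m) := by
  filter_upwards [eventually_gt_atTop (G.sup id)] with k hk
  refine Finset.disjoint_right.2 fun n hn hnG => ?_
  have := Finset.le_sup (f := id) hnG
  have := le_of_mem_intervalSet hseq hn
  simp only [id] at *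
  omega

theorem exists_subset_intervalSet_zero {S : Finset ℕ} (hS : (↑S : Set ℕ) ⊆ Set.range seq) :
    ∃ R, S ⊆ intervalSet seq 0 R := by
  classical
  rw [← Set.image_univ, Finset.subset_set_image_iff] at hS
  obtain ⟨S', -, rfl⟩ := hS
  obtain ⟨R, hR⟩ := S'.exists_nat_subset_range
  exact ⟨R, by simpa [intervalSet] using Finset.image_subset_image (f := seq) hR⟩

end IntervalSet

theorem exists_norm_eq_one_mul_eq {𝕜 : Type*} [RCLike 𝕜] (z : 𝕜) :
    ∃ u : 𝕜, ‖u‖ = 1 ∧ (‖z‖ : 𝕜) * u = z := by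
  rcases eq_or_ne z 0 with rfl | hz
  · exact ⟨1, by simp, by simp⟩
  · refine ⟨z / ‖z‖, by simp [norm_div, hz], ?_⟩
    have : (‖z‖ : 𝕜) ≠ 0 := by simpa using hz
    field_simp

theorem norm_add_sum_smul_le {𝕜 E ι : Type*} [RCLike 𝕜] [SeminormedAddCommGroup E]
    [NormedSpace 𝕜 E] {T : Finset ι} {w : E} {v : ι → E} {M : ℝ}
    (hM : ∀ S ⊆ T, ‖w + ∑ i ∈ S, v i‖ ≤ M) {c : ι → ℝ} (hc : ∀ i ∈ T, c i ∈ Set.Icc (0 : ℝ) 1) :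
    ‖w + ∑ i ∈ T, (c i : 𝕜) • v i‖ ≤ M := by
  classical
  induction T using Finset.induction_on generalizing w with
  | empty => simpa using hM ∅ le_rfl
  | @insert a T ha ih =>
    obtain ⟨hc0, hc1⟩ := hc a (T.mem_insert_self a)
    have hcT : ∀ i ∈ T, c i ∈ Set.Icc (0 : ℝ) 1 := fun i hi => hc i (Finset.mem_insert_of_mem hi)
    have hwith : ‖(w + v a) + ∑ i ∈ T, (c i : 𝕜) • v i‖ ≤ M := by
      refine ih (fun S hS => ?_) hcT
      simpa [Finset.sum_insert (fun h => ha (hS h)), add_assoc] using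
        hM (insert a S) (Finset.insert_subset_insert a hS)
    have hwithout : ‖w + ∑ i ∈ T, (c i : 𝕜) • v i‖ ≤ M :=
      ih (fun S hS => hM S (hS.trans (Finset.subset_insert a T))) hcT
    -- the new coefficient interpolates between taking `v a` fully and leaving it out
    have hsplit : w + ∑ i ∈ insert a T, (c i : 𝕜) • v i =
        (c a : 𝕜) • ((w + v a) + ∑ i ∈ T, (c i : 𝕜) • v i) +
          ((1 - c a : ℝ) : 𝕜) • (w + ∑ i ∈ T, (c i : 𝕜) • v i) := by
      rw [Finset.sum_insert ha]
      push_cast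
      module
    rw [hsplit]
    calc _ ≤ c a * M + (1 - c a) * M := by
          refine (norm_add_le _ _).trans (add_le_add ?_ ?_) <;>
            rw [norm_smul, RCLike.norm_ofReal, abs_of_nonneg (by linarith)]
          · exact mul_le_mul_of_nonneg_left hwith hc0
          · exact mul_le_mul_of_nonneg_left hwithout (sub_nonneg.2 hc1)
      _ = M := by ring

namespace BasisOf

variable {𝕜 X : Type*} [RCLike 𝕜] [NormedAddCommGroup X] [NormedSpace 𝕜 X] (B : BasisOf 𝕜 X)

theorem coord_sgnSum (a : ℕ → 𝕜) (T : Finset ℕ) (n : ℕ) :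
    B.coord n (B.sgnSum a T) = if n ∈ T then a n else 0 := by
  simp [sgnSum, B.biorth]

theorem proj_eq_sgnSum (A : Finset ℕ) (x : X) : B.proj A x = B.sgnSum (B.coord · x) A :=
  rfl

theorem coord_proj (A : Finset ℕ) (x : X) (n : ℕ) :
    B.coord n (B.proj A x) = if n ∈ A then B.coord n x else 0 := by
  rw [proj_eq_sgnSum, coord_sgnSum]

theorem coord_sub_proj (A : Finset ℕ) (x : X) (n : ℕ) :
    B.coord n (x - B.proj A x) = if n ∈ A then 0 else B.coord n x := by
  rw [map_sub, coord_proj]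
  split_ifs <;> simp

theorem sgnSum_congr {a b : ℕ → 𝕜} {T : Finset ℕ} (h : ∀ n ∈ T, a n = b n) :
    B.sgnSum a T = B.sgnSum b T :=
  Finset.sum_congr rfl fun n hn => by rw [h n hn]

theorem proj_congr {A : Finset ℕ} {x y : X} (h : ∀ n ∈ A, B.coord n x = B.coord n y) :
    B.proj A x = B.proj A y := by
  rw [proj_eq_sgnSum, proj_eq_sgnSum, B.sgnSum_congr h]

theorem ones_eq_sgnSum (T : Finset ℕ) : B.ones T = B.sgnSum 1 T := by
  simp [ones, sgnSum]

theorem proj_union {A D : Finset ℕ} (h : Disjoint A D) (x : X) :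
    B.proj (A ∪ D) x = B.proj A x + B.proj D x :=
  Finset.sum_union h

theorem proj_inter_add_proj_sdiff (A D : Finset ℕ) (x : X) :
    B.proj (A ∩ D) x + B.proj (A \ D) x = B.proj A x :=
  Finset.sum_inter_add_sum_sdiff A D _

theorem sgnSum_sub_proj (a : ℕ → 𝕜) (T F : Finset ℕ) :
    B.sgnSum a T - B.proj F (B.sgnSum a T) = B.sgnSum a (T \ F) := by
  have hproj : B.proj F (B.sgnSum a T) = B.sgnSum a (F ∩ T) := by
    simp only [proj, coord_sgnSum, ite_smul, zero_smul]
    exact Finset.sum_ite_mem F T _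
  rw [hproj, Finset.inter_comm, sgnSum, sgnSum, sgnSum, ← Finset.sdiff_inter_self_left,
    Finset.sum_sdiff_eq_sub Finset.inter_subset_left]

theorem tendsto_coord (x : X) : Tendsto (fun n => B.coord n x) atTop (𝓝 0) := by
  obtain ⟨-, c, -, -, hc⟩ := B.norm_bounds
  have hequi : Equicontinuous fun n => ⇑(B.coord n) :=
    ((NormedSpace.equicontinuous_TFAE B.coord).out 5 1).1
      (⟨c, fun n => (hc n).2⟩ : ∃ c, ∀ n, ‖B.coord n‖ ≤ c)
  have hclosed : IsClosed {x : X | Tendsto (fun n => B.coord n x) atTop (𝓝 ((fun _ => 0) x))} :=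
    hequi.isClosed_setOfPred_tendsto continuous_const
  have hspan : (Submodule.span 𝕜 (Set.range B.e) : Set X) ⊆
      {x : X | Tendsto (fun n => B.coord n x) atTop (𝓝 0)} := by
    intro x hx
    induction hx using Submodule.span_induction with
    | mem _ h =>
      obtain ⟨k, rfl⟩ := h
      refine tendsto_const_nhds.congr' ?_
      filter_upwards [eventually_gt_atTop k] with n hn
      simp [B.biorth, hn.ne']
    | zero => simp
    | add _ _ _ _ hx hy => simpa using hx.add hy
    | smul a _ _ hx => simpa using hx.const_mul a
  exact closure_minimal hspan hclosed (B.dense_span x)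

theorem tendsto_proj_intervalSet {seq : ℕ → ℕ} (hseq : StrictMono seq) (x : X) (m : ℕ) :
    Tendsto (fun k => B.proj (intervalSet seq k m) x) atTop (𝓝 0) := by
  obtain ⟨-, c, -, -, hc⟩ := B.norm_bounds
  have hsum : ∀ k, B.proj (intervalSet seq k m) x =
      ∑ i ∈ Finset.range m, B.coord (seq (k + i)) x • B.e (seq (k + i)) := fun k =>
    Finset.sum_image fun i _ j _ h => by simpa using hseq.injective h
  simp_rw [hsum]
  rw [← Finset.sum_const_zero (s := Finset.range m)]
  refine tendsto_finsetSum _ fun i _ => ?_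
  have hfar : Tendsto (fun k => seq (k + i)) atTop atTop :=
    hseq.tendsto_atTop.comp (tendsto_add_atTop_nat i)
  exact ((B.tendsto_coord x).comp hfar).zero_smul_isBoundedUnder_le
    (isBoundedUnder_of ⟨c, fun k => (hc _).1⟩)

variable {B} {seq : ℕ → ℕ} {C : ℝ}

theorem IsGreedySet.exists_subset_card_eq {x : X} {G : Finset ℕ} (hG : B.IsGreedySet x G) {s : ℕ}
    (hs : s ≤ G.card) : ∃ G' ⊆ G, G'.card = s ∧ B.IsGreedySet x G' := by
  classical
  induction s with
  | zero => exact ⟨∅, G.empty_subset, rfl, by simp [IsGreedySet]⟩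
  | succ s ih =>
    obtain ⟨G', hG'G, hG'card, hG'⟩ := ih (Nat.le_of_succ_le hs)
    have hne : (G \ G').Nonempty := by
      rw [← Finset.card_pos, Finset.card_sdiff_of_subset hG'G]
      omega
    obtain ⟨a, ha, hmax⟩ := Finset.exists_max_image (G \ G') (fun n => ‖B.coord n x‖) hne
    rw [Finset.mem_sdiff] at ha
    refine ⟨insert a G', Finset.insert_subset ha.1 hG'G, by rw [Finset.card_insert_of_notMem ha.2,
      hG'card], fun i hi j hj => ?_⟩
    rw [Finset.mem_insert, not_or] at hj
    rcases Finset.mem_insert.1 hi with rfl | hi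
    · by_cases hjG : j ∈ G
      · exact hmax j (Finset.mem_sdiff.2 ⟨hjG, hj.2⟩)
      · exact hG i ha.1 j hjG
    · exact hG' i hi j hj.2

theorem CAGIWith.suppQGWith (hseq : StrictMono seq) (hC : B.CAGIWith seq C) :
    B.SuppQGWith C := by
  intro y G hG hyG
  have hlim : Tendsto (fun k => C * ‖y - B.proj (intervalSet seq k G.card) y‖) atTop
      (𝓝 (C * ‖y‖)) := by
    simpa using ((B.tendsto_proj_intervalSet hseq y G.card).const_sub y).norm.const_mul C
  exact ge_of_tendsto' hlim fun k => hC y G.card (Finset.card_pos.2 hG) G rfl hyG k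

theorem CAGIWith.eventually_norm_sgnSum_le (hseq : StrictMono seq) (hC : B.CAGIWith seq C)
    {S : Finset ℕ} (hS : S.Nonempty) (hSr : (↑S : Set ℕ) ⊆ Set.range seq) {δ : ℕ → 𝕜}
    (hδ : ∀ n, ‖δ n‖ = 1) :
    ∀ᶠ k in atTop, ‖B.sgnSum δ S‖ ≤ C * ‖B.ones (intervalSet seq k S.card)‖ := by
  classical
  obtain ⟨R, hSI⟩ := exists_subset_intervalSet_zero hSr
  filter_upwards [eventually_ge_atTop R] with k hRk
  set I := intervalSet seq 0 R
  set K := intervalSet seq k S.card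
  have hIK : Disjoint I K := disjoint_intervalSet hseq (by simpa using hRk) _
  have hSK : Disjoint S K := hIK.mono_left hSI
  have hIcard : I.card = R := intervalSet_card hseq 0 R
  -- `z` has coefficients `δ` on `S`, `1` on the rest of `I ∪ K`, so `(I \ S) ∪ K` is greedy for it
  set a : ℕ → 𝕜 := fun n => if n ∈ S then δ n else 1
  set z := B.sgnSum a (I ∪ K)
  set F := (I \ S) ∪ K
  have hFcard : F.card = R := by
    rw [Finset.card_union_of_disjoint (hIK.mono_left Finset.sdiff_subset),
      Finset.card_sdiff_of_subset hSI, hIcard, intervalSet_card hseq]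
    have := Finset.card_le_card hSI
    omega
  have hR : 1 ≤ R := hIcard ▸ Finset.card_pos.2 (hS.mono hSI)
  have hz_le : ∀ j, ‖B.coord j z‖ ≤ 1 := fun j => by
    simp only [z, coord_sgnSum, a]
    split_ifs <;> simp [hδ]
  have hzF : B.IsGreedySet z F := by
    intro i hi j _
    have hiS : i ∉ S ∧ i ∈ I ∪ K := by grind [Finset.disjoint_left]
    simpa [z, coord_sgnSum, a, hiS.1, hiS.2] using hz_le j
  have key := hC z R hR F hFcard hzF 0
  have hzF' : (I ∪ K) \ F = S := by grind [Finset.disjoint_left]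
  rwa [sgnSum_sub_proj, sgnSum_sub_proj, hzF', Finset.union_sdiff_cancel_left hIK,
    B.sgnSum_congr (fun n hn => if_pos hn),
    B.sgnSum_congr (a := a) (b := 1) (fun n hn => if_neg (Finset.disjoint_right.1 hSK hn)),
    ← ones_eq_sgnSum] at key

theorem norm_proj_le_of_forall_sgnSum {E : Finset ℕ} {x : X} {t M : ℝ}
    (hx : ∀ n ∈ E, ‖B.coord n x‖ ≤ t)
    (hM : ∀ S ⊆ E, ∀ δ : ℕ → 𝕜, (∀ n, ‖δ n‖ = 1) → t * ‖B.sgnSum δ S‖ ≤ M) :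
    ‖B.proj E x‖ ≤ M := by
  rcases le_or_gt t 0 with ht | ht
  · have hzero : B.proj E x = 0 := Finset.sum_eq_zero fun n hn => by
      rw [norm_le_zero_iff.1 ((hx n hn).trans ht), zero_smul]
    simpa [hzero, sgnSum] using hM ∅ (Finset.empty_subset E) 1 (by simp)
  choose δ hδ hδx using fun n => exists_norm_eq_one_mul_eq (B.coord n x)
  have hproj : B.proj E x =
      0 + ∑ n ∈ E, ((‖B.coord n x‖ / t : ℝ) : 𝕜) • (t : 𝕜) • δ n • B.e n := by
    rw [zero_add]
    refine Finset.sum_congr rfl fun n _ => ?_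
    rw [smul_smul, smul_smul, ← RCLike.ofReal_mul, div_mul_cancel₀ _ ht.ne', hδx]
  rw [hproj]
  refine norm_add_sum_smul_le (fun S hS => ?_) fun n hn =>
    ⟨by positivity, div_le_one_of_le₀ (hx n hn) ht.le⟩
  rw [zero_add, ← Finset.smul_sum, norm_smul, RCLike.norm_ofReal, abs_of_pos ht]
  exact hM S hS δ hδ

theorem CAGIWith.mul_norm_ones_le (hseq : StrictMono seq) (hC0 : 0 ≤ C)
    (hC : B.CAGIWith seq C) {y : X} {G : Finset ℕ} (hG : B.IsGreedySet y G) (hGne : G.Nonempty)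
    {t : ℝ} (ht : 0 ≤ t) (htG : ∀ a ∈ G, t ≤ ‖B.coord a y‖) {k : ℕ}
    (hdisj : Disjoint G (intervalSet seq k G.card)) :
    t * ‖B.ones (intervalSet seq k G.card)‖ ≤
      2 * C * ‖y‖ + (C + 1) * ‖B.proj (intervalSet seq k G.card) y‖ := by
  set K := intervalSet seq k G.card
  -- replacing the coefficients of `y` on `K` by `t` keeps `G` greedy
  set ζ := y - B.proj K y + (t : 𝕜) • B.ones K with hζdef
  have hζ : ∀ n, B.coord n ζ = if n ∈ K then (t : 𝕜) else B.coord n y := fun n => by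
    rw [map_add, coord_sub_proj, map_smul, ones_eq_sgnSum, coord_sgnSum, smul_eq_mul]
    split_ifs <;> simp
  have hζG : ∀ n ∈ G, B.coord n ζ = B.coord n y := fun n hn => by
    rw [hζ, if_neg (Finset.disjoint_left.1 hdisj hn)]
  have hζK : B.proj K ζ = (t : 𝕜) • B.ones K := by
    rw [ones_eq_sgnSum, sgnSum, Finset.smul_sum]
    exact Finset.sum_congr rfl fun n hn => by rw [hζ, if_pos hn, Pi.one_apply, smul_smul, mul_one]
  have hGζ : B.IsGreedySet ζ G := fun a ha b hb => by
    rw [hζG a ha, hζ]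
    split_ifs
    · rw [RCLike.norm_ofReal, abs_of_nonneg ht]
      exact htG a ha
    · exact hG a ha b hb
  have hcagi : ‖ζ - B.proj G ζ‖ ≤ C * (‖y‖ + ‖B.proj K y‖) := by
    calc ‖ζ - B.proj G ζ‖ ≤ C * ‖ζ - B.proj K ζ‖ :=
          hC ζ G.card (Finset.card_pos.2 hGne) G rfl hGζ k
      _ = C * ‖y - B.proj K y‖ := by rw [hζK, add_sub_cancel_right]
      _ ≤ C * (‖y‖ + ‖B.proj K y‖) := by gcongr; exact norm_sub_le _ _
  have hsupp : ‖y - B.proj G y‖ ≤ C * ‖y‖ := hC.suppQGWith hseq y G hGne hG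
  have hdecomp : (t : 𝕜) • B.ones K = (ζ - B.proj G ζ) - (y - B.proj G y) + B.proj K y := by
    rw [B.proj_congr hζG, hζdef]
    abel
  calc t * ‖B.ones K‖ = ‖(t : 𝕜) • B.ones K‖ := by
        rw [norm_smul, RCLike.norm_ofReal, abs_of_nonneg ht]
    _ ≤ ‖ζ - B.proj G ζ‖ + ‖y - B.proj G y‖ + ‖B.proj K y‖ := by
        rw [hdecomp]
        exact (norm_add_le _ _).trans (by gcongr; exact norm_sub_le _ _)
    _ ≤ 2 * C * ‖y‖ + (C + 1) * ‖B.proj K y‖ := by linarith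

theorem CAGIWith.mul_norm_sgnSum_le (hseq : StrictMono seq) (hC0 : 0 ≤ C)
    (hC : B.CAGIWith seq C) {y : X} {G : Finset ℕ} (hG : B.IsGreedySet y G) {t : ℝ} (ht : 0 ≤ t)
    (htG : ∀ a ∈ G, t ≤ ‖B.coord a y‖) {S : Finset ℕ} (hSr : (↑S : Set ℕ) ⊆ Set.range seq)
    (hSG : S.card = G.card) {δ : ℕ → 𝕜} (hδ : ∀ n, ‖δ n‖ = 1) :
    t * ‖B.sgnSum δ S‖ ≤ 2 * C ^ 2 * ‖y‖ := by
  rcases S.eq_empty_or_nonempty with rfl | hS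
  · simp only [sgnSum, Finset.sum_empty, norm_zero, mul_zero]
    positivity
  have hGne : G.Nonempty := Finset.card_pos.1 (hSG ▸ Finset.card_pos.2 hS)
  have hlim : Tendsto (fun k => C * (2 * C * ‖y‖ + (C + 1) *
      ‖B.proj (intervalSet seq k G.card) y‖)) atTop (𝓝 (2 * C ^ 2 * ‖y‖)) := by
    convert (((B.tendsto_proj_intervalSet hseq y G.card).norm.const_mul (C + 1)).const_add
      (2 * C * ‖y‖)).const_mul C using 2
    simp only [norm_zero, mul_zero, add_zero]
    ring
  refine ge_of_tendsto hlim ?_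
  filter_upwards [hC.eventually_norm_sgnSum_le hseq hS hSr hδ,
    eventually_disjoint_intervalSet hseq G G.card] with k hk hdisj
  rw [hSG] at hk
  calc t * ‖B.sgnSum δ S‖ ≤ C * (t * ‖B.ones (intervalSet seq k G.card)‖) := by
        rw [mul_left_comm]
        exact mul_le_mul_of_nonneg_left hk ht
    _ ≤ _ := by gcongr; exact hC.mul_norm_ones_le hseq hC0 hG hGne ht htG hdisj

theorem CAGIWith.almostGreedyWith (hseq : StrictMono seq) (hC1 : 1 ≤ C)
    (hC : B.CAGIWith seq C) : B.AlmostGreedyWith seq (C + 2 * C ^ 2) := by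
  classical
  intro x m _ A hA hAx D hDr hD
  set y := x - B.proj D x with hy
  set A' := A \ D
  set E := D \ A
  have hcard : E.card = A'.card := Finset.card_sdiff_comm (hD.trans hA.symm)
  have hyA' : ∀ a ∈ A', B.coord a y = B.coord a x := fun a ha => by
    rw [coord_sub_proj, if_neg (Finset.mem_sdiff.1 ha).2]
  have hA'y : B.IsGreedySet y A' := fun a ha b hb => by
    rw [coord_sub_proj, hyA' a ha]
    split_ifs with hbD
    · simp
    · exact hAx a (Finset.mem_sdiff.1 ha).1 b fun hbA => hb (Finset.mem_sdiff.2 ⟨hbA, hbD⟩)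
  -- the largest coefficient of `x` on `E` separates the coefficients on `E` from those on `A'`
  set t : ℝ := ((E.sup fun n => ‖B.coord n x‖₊ : ℝ≥0) : ℝ)
  have htE : ∀ n ∈ E, ‖B.coord n x‖ ≤ t := fun n hn =>
    NNReal.coe_le_coe.2 (Finset.le_sup (f := fun n => ‖B.coord n x‖₊) hn)
  have htA' : ∀ a ∈ A', t ≤ ‖B.coord a y‖ := fun a ha => by
    rw [hyA' a ha, ← coe_nnnorm]
    exact NNReal.coe_le_coe.2 (Finset.sup_le fun n hn =>
      hAx a (Finset.mem_sdiff.1 ha).1 n (Finset.mem_sdiff.1 hn).2)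
  have hsupp : ‖y - B.proj A' y‖ ≤ C * ‖y‖ := by
    rcases A'.eq_empty_or_nonempty with hA'0 | hA'ne
    · simpa [hA'0, proj] using le_mul_of_one_le_left (norm_nonneg y) hC1
    · exact hC.suppQGWith hseq y A' hA'ne hA'y
  have hE : ‖B.proj E x‖ ≤ 2 * C ^ 2 * ‖y‖ := by
    refine norm_proj_le_of_forall_sgnSum htE fun S hS δ hδ => ?_
    obtain ⟨G, hGA', hGcard, hG⟩ := hA'y.exists_subset_card_eq (hcard ▸ Finset.card_le_card hS)
    exact hC.mul_norm_sgnSum_le hseq (by linarith) hG (NNReal.coe_nonneg _)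
      (fun a ha => htA' a (hGA' ha)) (fun n hn => hDr (Finset.sdiff_subset (hS hn))) hGcard.symm hδ
  have hdecomp : x - B.proj A x = (y - B.proj A' y) + B.proj E x := by
    rw [B.proj_congr hyA', hy, ← B.proj_inter_add_proj_sdiff A D,
      ← B.proj_inter_add_proj_sdiff D A, Finset.inter_comm D A]
    abel
  calc ‖x - B.proj A x‖ ≤ ‖y - B.proj A' y‖ + ‖B.proj E x‖ := hdecomp ▸ norm_add_le _ _
    _ ≤ (C + 2 * C ^ 2) * ‖x - B.proj D x‖ := by linarith

theorem AlmostGreedyWith.norm_sub_proj_le_intervalSet (hseq : StrictMono seq)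
    (h : B.AlmostGreedyWith seq C) {x : X} {m : ℕ} (hm : 1 ≤ m) {A : Finset ℕ} (hA : A.card = m)
    (hAx : B.IsGreedySet x A) {k' : ℕ} (hk' : k' ≤ m) (k : ℕ) :
    ‖x - B.proj A x‖ ≤ C * ‖x - B.proj (intervalSet seq k k') x‖ := by
  classical
  set I := intervalSet seq k k'
  -- pad `I` with a far-away interval, whose projection of `x` is negligible, to reach size `m`
  have hlim : Tendsto (fun j => C * ‖x - B.proj I x - B.proj (intervalSet seq j (m - k')) x‖)
      atTop (𝓝 (C * ‖x - B.proj I x‖)) := by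
    simpa using ((B.tendsto_proj_intervalSet hseq x (m - k')).const_sub
      (x - B.proj I x)).norm.const_mul C
  refine ge_of_tendsto hlim ?_
  filter_upwards [eventually_ge_atTop (k + k')] with j hj
  have hdisj := disjoint_intervalSet hseq hj (m - k')
  have hD := h x m hm A hA hAx (I ∪ intervalSet seq j (m - k'))
    (by simpa only [Finset.coe_union, Set.union_subset_iff] using
      ⟨intervalSet_subset_range k k', intervalSet_subset_range j (m - k')⟩)
    (by rw [Finset.card_union_of_disjoint hdisj, intervalSet_card hseq, intervalSet_card hseq]
        omega)
  rwa [proj_union _ hdisj, sub_add_eq_sub_sub] at hD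

end BasisOf

theorem statement13_general {𝕜 X : Type*} [RCLike 𝕜] [NormedAddCommGroup X] [NormedSpace 𝕜 X]
    (B : BasisOf 𝕜 X) (seq : ℕ → ℕ) (hseq : StrictMono seq) :
    (B.AlmostGreedy seq ↔
      ∃ C : ℝ, 1 ≤ C ∧ ∀ x : X, ∀ m : ℕ, 1 ≤ m → ∀ A : Finset ℕ, A.card = m →
        B.IsGreedySet x A → ∀ k' : ℕ, k' ≤ m → ∀ k : ℕ,
          ‖x - B.proj A x‖ ≤ C * ‖x - B.proj (intervalSet seq k k') x‖) ∧
    (B.AlmostGreedy seq ↔ ∃ C : ℝ, 1 ≤ C ∧ B.CAGIWith seq C) := by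
  have hcagi : B.AlmostGreedy seq ↔ ∃ C : ℝ, 1 ≤ C ∧ B.CAGIWith seq C :=
    ⟨fun ⟨C, hC1, h⟩ => ⟨C, hC1, fun x m hm A hA hAx k =>
        h.norm_sub_proj_le_intervalSet hseq hm hA hAx le_rfl k⟩,
      fun ⟨C, hC1, h⟩ => ⟨C + 2 * C ^ 2, by nlinarith, h.almostGreedyWith hseq hC1⟩⟩
  refine ⟨⟨fun ⟨C, hC1, h⟩ => ⟨C, hC1, fun x m hm A hA hAx k' hk' k =>
      h.norm_sub_proj_le_intervalSet hseq hm hA hAx hk' k⟩, fun ⟨C, hC1, h⟩ => hcagi.2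
    ⟨C, hC1, fun x m hm A hA hAx k => h x m hm A hA hAx m le_rfl k⟩⟩, hcagi⟩

/-- (𝐧, almost greedy) ⟺ the strengthened consecutive inequality
`‖x − G_m(x)‖ ≤ C·min_{0≤k≤m} σ̌^𝐧_k(x)` ⟺ (𝐧, consecutive almost greedy) of type I. -/
theorem statement13 {𝕜 X : Type*} [RCLike 𝕜] [NormedAddCommGroup X] [NormedSpace 𝕜 X]
    [CompleteSpace X] (B : BasisOf 𝕜 X) (seq : ℕ → ℕ) (hseq : StrictMono seq) :
    (B.AlmostGreedy seq ↔
      ∃ C : ℝ, 1 ≤ C ∧ ∀ x : X, ∀ m : ℕ, 1 ≤ m → ∀ A : Finset ℕ, A.card = m →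
        B.IsGreedySet x A → ∀ k' : ℕ, k' ≤ m → ∀ k : ℕ,
          ‖x - B.proj A x‖ ≤ C * ‖x - B.proj (intervalSet seq k k') x‖) ∧
    (B.AlmostGreedy seq ↔ ∃ C : ℝ, 1 ≤ C ∧ B.CAGIWith seq C) :=
  statement13_general B seq hseq
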